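/- Let $A_N(x) = (\rho_1,\rho_2)(M^{[Nx]-2} + \cdots + M + I) v_N$ where $v_N = (1-e^{-2\lambda/N},\ 1-e^{-\lambda/N})^{\prime}$. Under the symmetric condition, $A_N(x) \to \frac{2\lambda x}{\sigma^2}$ as $N \to \infty$ for each fixed $x \in (0,1]$ and $\lambda > 0$, where $\sigma^2 = 6q-2$. -/

import Mathlib

open Filter Real Matrix Topology Finset

/-!
Under the symmetric condition `p₁ + 2 p₂ = q`, put `b = ρ₂ ∈ (0, 1)`. The matrix `M` has the left
eigenvectors `(1 - b, b)` for the eigenvalue `1` and `(2, -1)` for `α = -b`, so `ρ Mⁱ = ℓ + αⁱ w` and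
`ρ (I + M + ⋯ + M^(k-1)) = k ℓ + (1 + α + ⋯ + α^(k-1)) w`, where the geometric factor stays bounded.
As `N v_N → (2λ, λ)` and `k / N → x` for `k = ⌊N x⌋ - 1`, the bounded term is killed by `v_N → 0`
and `A_N → x ℓ ⬝ (2λ, λ) = λ x / (3 q - 1) = 2 λ x / σ²`.
-/

theorem tendsto_natCast_mul_one_sub_exp_neg_div (c : ℝ) :
    Tendsto (fun N : ℕ => (N : ℝ) * (1 - exp (-c / N))) atTop (𝓝 c) := by
  have hderiv : HasDerivAt (fun t => -exp (-c * t)) c 0 := by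
    simpa using (((hasDerivAt_id (0 : ℝ)).const_mul (-c)).exp).fun_neg
  have hinv : Tendsto (fun N : ℕ => (N : ℝ)⁻¹) atTop (𝓝[>] 0) :=
    tendsto_inv_atTop_nhdsGT_zero.comp tendsto_natCast_atTop_atTop
  refine (hderiv.tendsto_slope_zero_right.comp hinv).congr fun N => ?_
  simp only [Function.comp_apply, inv_inv, zero_add, mul_zero, exp_zero, smul_eq_mul]
  ring_nf

theorem tendsto_natFloor_mul_sub_one_div {x : ℝ} (hx : 0 ≤ x) :
    Tendsto (fun N : ℕ => ((⌊(N : ℝ) * x⌋₊ - 1 : ℕ) : ℝ) / N) atTop (𝓝 x) := by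
  have hfloor : Tendsto (fun N : ℕ => (⌊(N : ℝ) * x⌋₊ : ℝ) / N) atTop (𝓝 x) := by
    simpa only [Function.comp_def, mul_comm x] using
      (tendsto_nat_floor_mul_div_atTop hx).comp tendsto_natCast_atTop_atTop
  have hlower : Tendsto (fun N : ℕ => (⌊(N : ℝ) * x⌋₊ : ℝ) / N - 1 / N) atTop (𝓝 x) := by
    simpa using hfloor.sub tendsto_one_div_atTop_nhds_zero_nat
  refine tendsto_of_tendsto_of_tendsto_of_le_of_le hlower hfloor (fun N => ?_) (fun N => ?_)
  · rw [← sub_div]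
    gcongr
    rw [sub_le_iff_le_add]
    exact (Nat.cast_le.2 le_tsub_add).trans_eq (Nat.cast_add_one _)
  · gcongr
    exact Nat.sub_le _ _

theorem abs_geom_sum_le {α : ℝ} (hα : |α| < 1) (k : ℕ) :
    |∑ i ∈ range k, α ^ i| ≤ 1 / (1 - |α|) :=
  calc |∑ i ∈ range k, α ^ i| ≤ ∑ i ∈ Ico 0 k, |α| ^ i := by
        simpa only [range_eq_Ico, abs_pow] using abs_sum_le_sum_abs (fun i => α ^ i) (Ico 0 k)
    _ ≤ |α| ^ 0 / (1 - |α|) := geom_sum_Ico_le_of_lt_one (abs_nonneg α) hα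
    _ = 1 / (1 - |α|) := by rw [pow_zero]

theorem tendsto_dotProduct_natCast_smul_add_geom_sum_smul {ι : Type*} [Fintype ι]
    {ℓ w v₀ : ι → ℝ} {α x : ℝ}
    (hα : |α| < 1) {k : ℕ → ℕ} (hk : Tendsto (fun N : ℕ => (k N : ℝ) / N) atTop (𝓝 x))
    {v : ℕ → ι → ℝ} (hv : Tendsto (fun N : ℕ => (N : ℝ) • v N) atTop (𝓝 v₀)) :
    Tendsto (fun N => ((k N : ℝ) • ℓ + (∑ i ∈ range (k N), α ^ i) • w) ⬝ᵥ v N) atTop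
      (𝓝 (x * (ℓ ⬝ᵥ v₀))) := by
  have hv_zero : Tendsto v atTop (𝓝 0) := by
    have := (tendsto_one_div_atTop_nhds_zero_nat (𝕜 := ℝ)).smul hv
    rw [zero_smul] at this
    refine this.congr' ?_
    filter_upwards [eventually_ne_atTop 0] with N hN
    rw [smul_smul, one_div_mul_cancel (Nat.cast_ne_zero.2 hN), one_smul]
  have hlinear : Tendsto (fun N => (k N : ℝ) / N * (ℓ ⬝ᵥ ((N : ℝ) • v N))) atTop
      (𝓝 (x * (ℓ ⬝ᵥ v₀))) :=
    hk.mul (((continuous_const.dotProduct continuous_id).tendsto v₀).comp hv)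
  have hbounded : IsBoundedUnder (· ≤ ·) atTop fun N => ‖∑ i ∈ range (k N), α ^ i‖ :=
    isBoundedUnder_of ⟨1 / (1 - |α|), fun N => abs_geom_sum_le hα (k N)⟩
  have hgeom : Tendsto (fun N => (∑ i ∈ range (k N), α ^ i) * (w ⬝ᵥ v N)) atTop (𝓝 0) := by
    refine isBoundedUnder_le_mul_tendsto_zero hbounded ?_
    simpa [Function.comp_def] using
      ((continuous_const.dotProduct continuous_id).tendsto 0).comp hv_zero
  rw [← add_zero (x * _)]
  refine (hlinear.add hgeom).congr' ?_
  filter_upwards [eventually_ne_atTop 0] with N hN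
  simp only [add_dotProduct, smul_dotProduct, dotProduct_smul, smul_eq_mul]
  field_simp

theorem vecMul_sum_range_pow {n R : Type*} [Fintype n] [DecidableEq n] [CommRing R]
    {M : Matrix n n R} {r ℓ w : n → R} {α : R} (h : ∀ i, r ᵥ* (M ^ i) = ℓ + α ^ i • w)
    (k : ℕ) : r ᵥ* (∑ i ∈ range k, M ^ i) = (k : R) • ℓ + (∑ i ∈ range k, α ^ i) • w := by
  simp only [vecMul_sum, h, sum_add_distrib, ← sum_smul, sum_const, card_range,
    Nat.cast_smul_eq_nsmul]

theorem vec2_vecMul {R : Type*} [CommRing R] (x y a b c d : R) :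
    ![x, y] ᵥ* !![a, b; c, d] = ![x * a + y * c, x * b + y * d] := by
  simp [vecMul_cons]

section
variable {a b : ℝ}

theorem vecMul_eigenvector_one (hab : a + 2 * b = 1) :
    ![1 - b, b] ᵥ* !![a, b; 1 + a, b] = ![1 - b, b] := by
  rw [vec2_vecMul]
  exact vec2_eq (by linear_combination hab) (by ring)

theorem vecMul_eigenvector_neg (hab : a + 2 * b = 1) :
    ![2, -1] ᵥ* !![a, b; 1 + a, b] = -b • ![2, -1] := by
  rw [vec2_vecMul, smul_vec2]
  exact vec2_eq (by linear_combination hab) (by ring)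

theorem vecMul_pow_eq_add_pow_smul (hab : a + 2 * b = 1) (hb : 1 + b ≠ 0) (i : ℕ) :
    ![a, b] ᵥ* (!![a, b; 1 + a, b] ^ i) =
      (1 + b)⁻¹ • ![1 - b, b] + (-b) ^ i • (-(b ^ 2 / (1 + b))) • ![2, -1] := by
  induction i with
  | zero =>
    simp only [pow_zero, vecMul_one, one_smul, smul_vec2, smul_eq_mul, vec2_add]
    refine vec2_eq ?_ ?_
    · field_simp
      linear_combination (1 + b) * hab
    · field_simp
  | succ i ih =>
    rw [pow_succ, ← vecMul_vecMul, ih, add_vecMul, smul_vecMul, smul_vecMul, smul_vecMul,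
      vecMul_eigenvector_one hab, vecMul_eigenvector_neg hab, smul_comm _ (-b), smul_smul,
      ← pow_succ]
end

theorem stmt13_general (p1 p2 q : ℝ) (hp1 : 0 < p1) (hp2 : 0 < p2)
    (hq : 0 < q) (hsum : p1 + p2 + q = 1) (hsym : p1 + 2 * p2 - q = 0)
    (M : Matrix (Fin 2) (Fin 2) ℝ)
    (hM : M = !![p1 / q, p2 / q; 1 + p1 / q, p2 / q])
    (σ2 : ℝ) (hσ : σ2 = 6 * q - 2)
    (lam : ℝ) (x : ℝ) (hx : x ∈ Set.Ioc (0:ℝ) 1) :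
    Tendsto (fun N : ℕ =>
        Matrix.vecMul ![p1 / q, p2 / q]
            (∑ i ∈ Finset.range (⌊(N : ℝ) * x⌋₊ - 1), M ^ i) ⬝ᵥ
          ![1 - Real.exp (-(2 * lam) / N), 1 - Real.exp (-lam / N)])
      atTop (nhds (2 * lam * x / σ2)) := by
  subst hM hσ
  have hab : p1 / q + 2 * (p2 / q) = 1 := by field_simp; linarith
  have hb : 0 < p2 / q := div_pos hp2 hq
  have hα : |-(p2 / q)| < 1 := by
    rw [abs_neg, abs_of_pos hb, div_lt_one hq]; linarith
  have hv : Tendsto (fun N : ℕ => (N : ℝ) • ![1 - exp (-(2 * lam) / N), 1 - exp (-lam / N)])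
      atTop (𝓝 ![2 * lam, lam]) := by
    simp only [smul_vec2, smul_eq_mul, tendsto_pi_nhds, Fin.forall_fin_two]
    exact ⟨by simpa using tendsto_natCast_mul_one_sub_exp_neg_div (2 * lam),
      by simpa using tendsto_natCast_mul_one_sub_exp_neg_div lam⟩
  simp_rw [vecMul_sum_range_pow (vecMul_pow_eq_add_pow_smul hab (by positivity))]
  convert tendsto_dotProduct_natCast_smul_add_geom_sum_smul hα
    (tendsto_natFloor_mul_sub_one_div hx.1.le) hv using 2
  obtain rfl : p2 = 2 * q - 1 := by linarith
  have hσ2 : 6 * q - 2 ≠ 0 := by linarith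
  rw [smul_dotProduct, vec2_dotProduct', smul_eq_mul]
  field_simp
  ring

theorem stmt13 (p1 p2 q : ℝ) (hp1 : 0 < p1) (hp1' : p1 < 1) (hp2 : 0 < p2) (hp2' : p2 < 1)
    (hq : 0 < q) (hq' : q < 1) (hsum : p1 + p2 + q = 1) (hsym : p1 + 2 * p2 - q = 0)
    (hq3 : q ≠ 1 / 3)
    (M : Matrix (Fin 2) (Fin 2) ℝ)
    (hM : M = !![p1 / q, p2 / q; 1 + p1 / q, p2 / q])
    (σ2 : ℝ) (hσ : σ2 = 6 * q - 2)
    (lam : ℝ) (hlam : 0 < lam) (x : ℝ) (hx : x ∈ Set.Ioc (0:ℝ) 1) :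
    Tendsto (fun N : ℕ =>
        Matrix.vecMul ![p1 / q, p2 / q]
            (∑ i ∈ Finset.range (⌊(N : ℝ) * x⌋₊ - 1), M ^ i) ⬝ᵥ
          ![1 - Real.exp (-(2 * lam) / N), 1 - Real.exp (-lam / N)])
      atTop (nhds (2 * lam * x / σ2)) :=
  stmt13_general p1 p2 q hp1 hp2 hq hsum hsym M hM σ2 hσ lam x hx
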